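/- arXiv:2407.02875 — 3 statements merged into one kernel-verified Lean document; each statement's English description precedes it below -/
import Mathlib

section
/- For every t ∈ ℂ⁴, the dimension of the deformed Dolbeault cohomology H^{1,1}(t) = (ker(δ_t) ∩ Λ^{1,1}) / δ_t(Λ^{1,0}) equals 6 if (t₁₁,t₁₂,t₂₁,t₂₂) = (0,0,0,0) and equals 5 otherwise. -/
noncomputable section

open ExteriorAlgebra

/-- The exterior algebra `Λ` over `ℂ` on six generators. -/
abbrev Lam : Type := ExteriorAlgebra ℂ (Fin 6 → ℂ)

/-- The generators `x₁, x₂, x₃` of bidegree `(1,0)` (indexed by `0, 1, 2`). -/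
def xg (i : Fin 3) : Lam := ExteriorAlgebra.ι ℂ (Pi.single (Fin.castAdd 3 i) 1)

/-- The generators `y₁, y₂, y₃` of bidegree `(0,1)` (indexed by `0, 1, 2`). -/
def yg (j : Fin 3) : Lam := ExteriorAlgebra.ι ℂ (Pi.single (Fin.natAdd 3 j) 1)

/-- The ordered wedge monomial `x_{i₁}∧⋯∧x_{i_p}∧y_{j₁}∧⋯∧y_{j_q}` attached
to finsets `s = {i₁ < ⋯ < i_p}` and `u = {j₁ < ⋯ < j_q}`. -/
def monom (s u : Finset (Fin 3)) : Lam :=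
  ((s.sort (· ≤ ·)).map xg).prod * ((u.sort (· ≤ ·)).map yg).prod

/-- The bigraded component `Λ^{p,q}`, the span of the monomials of bidegree `(p,q)`. -/
def bigraded (p q : ℤ) : Submodule ℂ Lam :=
  Submodule.span ℂ
    {m | ∃ s u : Finset (Fin 3), (s.card : ℤ) = p ∧ (u.card : ℤ) = q ∧ m = monom s u}

/-- The component of pure total degree `k` of `Λ`. -/
def degComp (k : ℕ) : Submodule ℂ Lam :=
  LinearMap.range (ExteriorAlgebra.ι ℂ : (Fin 6 → ℂ) →ₗ[ℂ] Lam) ^ k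

/-- The graded Leibniz rule: `d(a∧b) = d(a)∧b + (−1)ᵏ a∧d(b)` for `a` of pure
total degree `k`. -/
def IsAntiderivation (d : Lam →ₗ[ℂ] Lam) : Prop :=
  ∀ (k : ℕ), ∀ a ∈ degComp k, ∀ b : Lam,
    d (a * b) = d a * b + ((-1 : ℂ) ^ k) • (a * d b)

/-- `d` is the map `∂`: the antiderivation with `∂x₁ = ∂x₂ = 0`, `∂x₃ = −x₁∧x₂`,
`∂yⱼ = 0`. -/
def IsDel (d : Lam →ₗ[ℂ] Lam) : Prop :=
  IsAntiderivation d ∧ d (xg 0) = 0 ∧ d (xg 1) = 0 ∧ d (xg 2) = -(xg 0 * xg 1) ∧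
    (∀ j, d (yg j) = 0)

/-- `d` is the map `δ_t`: the antiderivation with `δ_t x₁ = δ_t x₂ = 0`,
`δ_t x₃ = t₂₁ x₁∧y₁ − t₁₁ x₂∧y₁ + t₂₂ x₁∧y₂ − t₁₂ x₂∧y₂`, `δ_t y₁ = δ_t y₂ = 0`,
`δ_t y₃ = −y₁∧y₂`. -/
def IsDelta (t11 t12 t21 t22 : ℂ) (d : Lam →ₗ[ℂ] Lam) : Prop :=
  IsAntiderivation d ∧ d (xg 0) = 0 ∧ d (xg 1) = 0 ∧
    d (xg 2) = t21 • (xg 0 * yg 0) - t11 • (xg 1 * yg 0)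
      + t22 • (xg 0 * yg 1) - t12 • (xg 1 * yg 1) ∧
    d (yg 0) = 0 ∧ d (yg 1) = 0 ∧ d (yg 2) = -(yg 0 * yg 1)

/-- The dimension of the quotient of the subspace `K` by (its intersection with)
the subspace `I`; when `I ⊆ K` this is `dim (K / I)`. -/
def quotDim (K I : Submodule ℂ Lam) : ℕ :=
  Module.finrank ℂ (↥K ⧸ Submodule.comap K.subtype I)

-- ### functionals
def phi2 (w : Fin 2 → Fin 6) : Lam →ₗ[ℂ] ℂ :=
  liftAlternating (fun i => match i with
    | 2 => (Matrix.detRowAlternating).compLinearMap (LinearMap.funLeft ℂ ℂ w) | _ => 0)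

def phi3 (w : Fin 3 → Fin 6) : Lam →ₗ[ℂ] ℂ :=
  liftAlternating (fun i => match i with
    | 3 => (Matrix.detRowAlternating).compLinearMap (LinearMap.funLeft ℂ ℂ w) | _ => 0)

lemma mul2 (a b : Fin 6 → ℂ) : ι ℂ a * ι ℂ b = ιMulti ℂ 2 ![a, b] := by
  rw [ιMulti_apply]; simp [List.ofFn_succ]

lemma mul3 (a b c : Fin 6 → ℂ) : ι ℂ a * ι ℂ b * ι ℂ c = ιMulti ℂ 3 ![a, b, c] := by
  rw [ιMulti_apply]; simp [List.ofFn_succ, mul_assoc]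

lemma phi2_mul (w : Fin 2 → Fin 6) (a b : Fin 6 → ℂ) :
    phi2 w (ι ℂ a * ι ℂ b) = a (w 0) * b (w 1) - a (w 1) * b (w 0) := by
  rw [mul2, phi2, liftAlternating_apply_ιMulti]
  show Matrix.det (Matrix.of fun k => (![a, b] k) ∘ w) = _
  rw [Matrix.det_fin_two]; simp [LinearMap.funLeft]

lemma phi3_mul (w : Fin 3 → Fin 6) (a b c : Fin 6 → ℂ) :
    phi3 w (ι ℂ a * ι ℂ b * ι ℂ c) =
      a (w 0) * (b (w 1) * c (w 2) - b (w 2) * c (w 1))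
      - a (w 1) * (b (w 0) * c (w 2) - b (w 2) * c (w 0))
      + a (w 2) * (b (w 0) * c (w 1) - b (w 1) * c (w 0)) := by
  rw [mul3, phi3, liftAlternating_apply_ιMulti]
  show Matrix.det (Matrix.of fun k => (![a, b, c] k) ∘ w) = _
  rw [Matrix.det_fin_three]; simp [LinearMap.funLeft]; ring

def Xv (i : Fin 3) : Fin 6 → ℂ := Pi.single (Fin.castAdd 3 i) 1
def Yv (j : Fin 3) : Fin 6 → ℂ := Pi.single (Fin.natAdd 3 j) 1

lemma xg_def (i : Fin 3) : xg i = ι ℂ (Xv i) := rfl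
lemma yg_def (j : Fin 3) : yg j = ι ℂ (Yv j) := rfl

lemma phi2_xy (w : Fin 2 → Fin 6) (i j : Fin 3) :
    phi2 w (xg i * yg j) = Xv i (w 0) * Yv j (w 1) - Xv i (w 1) * Yv j (w 0) := by
  rw [xg_def, yg_def, phi2_mul]

lemma phi3_xyy (w : Fin 3 → Fin 6) (i j k : Fin 3) :
    phi3 w (xg i * (yg j * yg k)) =
      Xv i (w 0) * (Yv j (w 1) * Yv k (w 2) - Yv j (w 2) * Yv k (w 1))
      - Xv i (w 1) * (Yv j (w 0) * Yv k (w 2) - Yv j (w 2) * Yv k (w 0))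
      + Xv i (w 2) * (Yv j (w 0) * Yv k (w 1) - Yv j (w 1) * Yv k (w 0)) := by
  rw [xg_def, yg_def, yg_def, ← mul_assoc, phi3_mul]

-- ### algebra relations
lemma yg_sq (j : Fin 3) : yg j * yg j = 0 := by rw [yg_def]; exact ι_sq_zero _

lemma yg_swap : yg 1 * yg 0 = -(yg 0 * yg 1) := by
  have h := ι_add_mul_swap (R := ℂ)
    (Pi.single (Fin.natAdd 3 (1:Fin 3)) 1 : Fin 6 → ℂ)
    (Pi.single (Fin.natAdd 3 (0:Fin 3)) 1 : Fin 6 → ℂ)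
  exact eq_neg_of_add_eq_zero_left h

-- ### bigraded descriptions
lemma monom_single (i j : Fin 3) : monom {i} {j} = xg i * yg j := by
  simp [monom, Finset.sort_singleton]

lemma monom_single_empty (i : Fin 3) : monom {i} ∅ = xg i := by
  simp [monom, Finset.sort_singleton]

lemma bigraded11 : bigraded 1 1 =
    Submodule.span ℂ (Set.range fun p : Fin 3 × Fin 3 => xg p.1 * yg p.2) := by
  unfold bigraded; congr 1; ext m
  constructor
  · rintro ⟨s, u, hs, hu, rfl⟩
    have hs' : s.card = 1 := by exact_mod_cast hs
    have hu' : u.card = 1 := by exact_mod_cast hu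
    obtain ⟨i, rfl⟩ := Finset.card_eq_one.mp hs'
    obtain ⟨j, rfl⟩ := Finset.card_eq_one.mp hu'
    exact ⟨(i, j), (monom_single i j).symm⟩
  · rintro ⟨⟨i, j⟩, rfl⟩
    exact ⟨{i}, {j}, by simp, by simp, (monom_single i j).symm⟩

lemma bigraded10 : bigraded 1 0 = Submodule.span ℂ (Set.range xg) := by
  unfold bigraded; congr 1; ext m
  constructor
  · rintro ⟨s, u, hs, hu, rfl⟩
    have hs' : s.card = 1 := by exact_mod_cast hs
    have hu' : u.card = 0 := by exact_mod_cast hu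
    obtain ⟨i, rfl⟩ := Finset.card_eq_one.mp hs'
    rw [Finset.card_eq_zero.mp hu']
    exact ⟨i, (monom_single_empty i).symm⟩
  · rintro ⟨i, rfl⟩
    exact ⟨{i}, ∅, by simp, by simp, (monom_single_empty i).symm⟩

lemma mem_b11 (i j : Fin 3) : xg i * yg j ∈ bigraded 1 1 := by
  rw [bigraded11]; exact Submodule.subset_span ⟨(i, j), rfl⟩

-- the candidate kernel basis
def vl (t11 t12 t21 t22 : ℂ) : Fin 6 → Lam :=
  ![xg 0 * yg 0, xg 1 * yg 0, xg 0 * yg 1, xg 1 * yg 1,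
    xg 2 * yg 0 + t22 • (xg 0 * yg 2) - t12 • (xg 1 * yg 2),
    xg 2 * yg 1 - t21 • (xg 0 * yg 2) + t11 • (xg 1 * yg 2)]
lemma ev3_0_001 : phi3 ![0,3,4] (xg 0 * (yg 0 * yg 1)) = 1 := by
  rw [phi3_xyy]; simp (config := {decide := true}) [Xv, Yv, Pi.single_apply]

lemma ev3_0_101 : phi3 ![0,3,4] (xg 1 * (yg 0 * yg 1)) = 0 := by
  rw [phi3_xyy]; simp (config := {decide := true}) [Xv, Yv, Pi.single_apply]

lemma ev3_0_201 : phi3 ![0,3,4] (xg 2 * (yg 0 * yg 1)) = 0 := by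
  rw [phi3_xyy]; simp (config := {decide := true}) [Xv, Yv, Pi.single_apply]

lemma ev3_0_002 : phi3 ![0,3,4] (xg 0 * (yg 0 * yg 2)) = 0 := by
  rw [phi3_xyy]; simp (config := {decide := true}) [Xv, Yv, Pi.single_apply]

lemma ev3_0_102 : phi3 ![0,3,4] (xg 1 * (yg 0 * yg 2)) = 0 := by
  rw [phi3_xyy]; simp (config := {decide := true}) [Xv, Yv, Pi.single_apply]

lemma ev3_0_012 : phi3 ![0,3,4] (xg 0 * (yg 1 * yg 2)) = 0 := by
  rw [phi3_xyy]; simp (config := {decide := true}) [Xv, Yv, Pi.single_apply]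

lemma ev3_0_112 : phi3 ![0,3,4] (xg 1 * (yg 1 * yg 2)) = 0 := by
  rw [phi3_xyy]; simp (config := {decide := true}) [Xv, Yv, Pi.single_apply]

lemma ev3_1_001 : phi3 ![1,3,4] (xg 0 * (yg 0 * yg 1)) = 0 := by
  rw [phi3_xyy]; simp (config := {decide := true}) [Xv, Yv, Pi.single_apply]

lemma ev3_1_101 : phi3 ![1,3,4] (xg 1 * (yg 0 * yg 1)) = 1 := by
  rw [phi3_xyy]; simp (config := {decide := true}) [Xv, Yv, Pi.single_apply]

lemma ev3_1_201 : phi3 ![1,3,4] (xg 2 * (yg 0 * yg 1)) = 0 := by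
  rw [phi3_xyy]; simp (config := {decide := true}) [Xv, Yv, Pi.single_apply]

lemma ev3_1_002 : phi3 ![1,3,4] (xg 0 * (yg 0 * yg 2)) = 0 := by
  rw [phi3_xyy]; simp (config := {decide := true}) [Xv, Yv, Pi.single_apply]

lemma ev3_1_102 : phi3 ![1,3,4] (xg 1 * (yg 0 * yg 2)) = 0 := by
  rw [phi3_xyy]; simp (config := {decide := true}) [Xv, Yv, Pi.single_apply]

lemma ev3_1_012 : phi3 ![1,3,4] (xg 0 * (yg 1 * yg 2)) = 0 := by
  rw [phi3_xyy]; simp (config := {decide := true}) [Xv, Yv, Pi.single_apply]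

lemma ev3_1_112 : phi3 ![1,3,4] (xg 1 * (yg 1 * yg 2)) = 0 := by
  rw [phi3_xyy]; simp (config := {decide := true}) [Xv, Yv, Pi.single_apply]

lemma ev3_2_001 : phi3 ![2,3,4] (xg 0 * (yg 0 * yg 1)) = 0 := by
  rw [phi3_xyy]; simp (config := {decide := true}) [Xv, Yv, Pi.single_apply]

lemma ev3_2_101 : phi3 ![2,3,4] (xg 1 * (yg 0 * yg 1)) = 0 := by
  rw [phi3_xyy]; simp (config := {decide := true}) [Xv, Yv, Pi.single_apply]

lemma ev3_2_201 : phi3 ![2,3,4] (xg 2 * (yg 0 * yg 1)) = 1 := by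
  rw [phi3_xyy]; simp (config := {decide := true}) [Xv, Yv, Pi.single_apply]

lemma ev3_2_002 : phi3 ![2,3,4] (xg 0 * (yg 0 * yg 2)) = 0 := by
  rw [phi3_xyy]; simp (config := {decide := true}) [Xv, Yv, Pi.single_apply]

lemma ev3_2_102 : phi3 ![2,3,4] (xg 1 * (yg 0 * yg 2)) = 0 := by
  rw [phi3_xyy]; simp (config := {decide := true}) [Xv, Yv, Pi.single_apply]

lemma ev3_2_012 : phi3 ![2,3,4] (xg 0 * (yg 1 * yg 2)) = 0 := by
  rw [phi3_xyy]; simp (config := {decide := true}) [Xv, Yv, Pi.single_apply]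

lemma ev3_2_112 : phi3 ![2,3,4] (xg 1 * (yg 1 * yg 2)) = 0 := by
  rw [phi3_xyy]; simp (config := {decide := true}) [Xv, Yv, Pi.single_apply]

lemma ev2_00_00 : phi2 ![0,3] (xg 0 * yg 0) = 1 := by
  rw [phi2_xy]; simp (config := {decide := true}) [Xv, Yv, Pi.single_apply]

lemma ev2_00_01 : phi2 ![0,3] (xg 0 * yg 1) = 0 := by
  rw [phi2_xy]; simp (config := {decide := true}) [Xv, Yv, Pi.single_apply]

lemma ev2_00_02 : phi2 ![0,3] (xg 0 * yg 2) = 0 := by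
  rw [phi2_xy]; simp (config := {decide := true}) [Xv, Yv, Pi.single_apply]

lemma ev2_00_10 : phi2 ![0,3] (xg 1 * yg 0) = 0 := by
  rw [phi2_xy]; simp (config := {decide := true}) [Xv, Yv, Pi.single_apply]

lemma ev2_00_11 : phi2 ![0,3] (xg 1 * yg 1) = 0 := by
  rw [phi2_xy]; simp (config := {decide := true}) [Xv, Yv, Pi.single_apply]

lemma ev2_00_12 : phi2 ![0,3] (xg 1 * yg 2) = 0 := by
  rw [phi2_xy]; simp (config := {decide := true}) [Xv, Yv, Pi.single_apply]

lemma ev2_00_20 : phi2 ![0,3] (xg 2 * yg 0) = 0 := by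
  rw [phi2_xy]; simp (config := {decide := true}) [Xv, Yv, Pi.single_apply]

lemma ev2_00_21 : phi2 ![0,3] (xg 2 * yg 1) = 0 := by
  rw [phi2_xy]; simp (config := {decide := true}) [Xv, Yv, Pi.single_apply]

lemma ev2_00_22 : phi2 ![0,3] (xg 2 * yg 2) = 0 := by
  rw [phi2_xy]; simp (config := {decide := true}) [Xv, Yv, Pi.single_apply]

lemma ev2_10_00 : phi2 ![1,3] (xg 0 * yg 0) = 0 := by
  rw [phi2_xy]; simp (config := {decide := true}) [Xv, Yv, Pi.single_apply]

lemma ev2_10_01 : phi2 ![1,3] (xg 0 * yg 1) = 0 := by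
  rw [phi2_xy]; simp (config := {decide := true}) [Xv, Yv, Pi.single_apply]

lemma ev2_10_02 : phi2 ![1,3] (xg 0 * yg 2) = 0 := by
  rw [phi2_xy]; simp (config := {decide := true}) [Xv, Yv, Pi.single_apply]

lemma ev2_10_10 : phi2 ![1,3] (xg 1 * yg 0) = 1 := by
  rw [phi2_xy]; simp (config := {decide := true}) [Xv, Yv, Pi.single_apply]

lemma ev2_10_11 : phi2 ![1,3] (xg 1 * yg 1) = 0 := by
  rw [phi2_xy]; simp (config := {decide := true}) [Xv, Yv, Pi.single_apply]

lemma ev2_10_12 : phi2 ![1,3] (xg 1 * yg 2) = 0 := by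
  rw [phi2_xy]; simp (config := {decide := true}) [Xv, Yv, Pi.single_apply]

lemma ev2_10_20 : phi2 ![1,3] (xg 2 * yg 0) = 0 := by
  rw [phi2_xy]; simp (config := {decide := true}) [Xv, Yv, Pi.single_apply]

lemma ev2_10_21 : phi2 ![1,3] (xg 2 * yg 1) = 0 := by
  rw [phi2_xy]; simp (config := {decide := true}) [Xv, Yv, Pi.single_apply]

lemma ev2_10_22 : phi2 ![1,3] (xg 2 * yg 2) = 0 := by
  rw [phi2_xy]; simp (config := {decide := true}) [Xv, Yv, Pi.single_apply]

lemma ev2_01_00 : phi2 ![0,4] (xg 0 * yg 0) = 0 := by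
  rw [phi2_xy]; simp (config := {decide := true}) [Xv, Yv, Pi.single_apply]

lemma ev2_01_01 : phi2 ![0,4] (xg 0 * yg 1) = 1 := by
  rw [phi2_xy]; simp (config := {decide := true}) [Xv, Yv, Pi.single_apply]

lemma ev2_01_02 : phi2 ![0,4] (xg 0 * yg 2) = 0 := by
  rw [phi2_xy]; simp (config := {decide := true}) [Xv, Yv, Pi.single_apply]

lemma ev2_01_10 : phi2 ![0,4] (xg 1 * yg 0) = 0 := by
  rw [phi2_xy]; simp (config := {decide := true}) [Xv, Yv, Pi.single_apply]

lemma ev2_01_11 : phi2 ![0,4] (xg 1 * yg 1) = 0 := by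
  rw [phi2_xy]; simp (config := {decide := true}) [Xv, Yv, Pi.single_apply]

lemma ev2_01_12 : phi2 ![0,4] (xg 1 * yg 2) = 0 := by
  rw [phi2_xy]; simp (config := {decide := true}) [Xv, Yv, Pi.single_apply]

lemma ev2_01_20 : phi2 ![0,4] (xg 2 * yg 0) = 0 := by
  rw [phi2_xy]; simp (config := {decide := true}) [Xv, Yv, Pi.single_apply]

lemma ev2_01_21 : phi2 ![0,4] (xg 2 * yg 1) = 0 := by
  rw [phi2_xy]; simp (config := {decide := true}) [Xv, Yv, Pi.single_apply]

lemma ev2_01_22 : phi2 ![0,4] (xg 2 * yg 2) = 0 := by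
  rw [phi2_xy]; simp (config := {decide := true}) [Xv, Yv, Pi.single_apply]

lemma ev2_11_00 : phi2 ![1,4] (xg 0 * yg 0) = 0 := by
  rw [phi2_xy]; simp (config := {decide := true}) [Xv, Yv, Pi.single_apply]

lemma ev2_11_01 : phi2 ![1,4] (xg 0 * yg 1) = 0 := by
  rw [phi2_xy]; simp (config := {decide := true}) [Xv, Yv, Pi.single_apply]

lemma ev2_11_02 : phi2 ![1,4] (xg 0 * yg 2) = 0 := by
  rw [phi2_xy]; simp (config := {decide := true}) [Xv, Yv, Pi.single_apply]

lemma ev2_11_10 : phi2 ![1,4] (xg 1 * yg 0) = 0 := by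
  rw [phi2_xy]; simp (config := {decide := true}) [Xv, Yv, Pi.single_apply]

lemma ev2_11_11 : phi2 ![1,4] (xg 1 * yg 1) = 1 := by
  rw [phi2_xy]; simp (config := {decide := true}) [Xv, Yv, Pi.single_apply]

lemma ev2_11_12 : phi2 ![1,4] (xg 1 * yg 2) = 0 := by
  rw [phi2_xy]; simp (config := {decide := true}) [Xv, Yv, Pi.single_apply]

lemma ev2_11_20 : phi2 ![1,4] (xg 2 * yg 0) = 0 := by
  rw [phi2_xy]; simp (config := {decide := true}) [Xv, Yv, Pi.single_apply]

lemma ev2_11_21 : phi2 ![1,4] (xg 2 * yg 1) = 0 := by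
  rw [phi2_xy]; simp (config := {decide := true}) [Xv, Yv, Pi.single_apply]

lemma ev2_11_22 : phi2 ![1,4] (xg 2 * yg 2) = 0 := by
  rw [phi2_xy]; simp (config := {decide := true}) [Xv, Yv, Pi.single_apply]

lemma ev2_20_00 : phi2 ![2,3] (xg 0 * yg 0) = 0 := by
  rw [phi2_xy]; simp (config := {decide := true}) [Xv, Yv, Pi.single_apply]

lemma ev2_20_01 : phi2 ![2,3] (xg 0 * yg 1) = 0 := by
  rw [phi2_xy]; simp (config := {decide := true}) [Xv, Yv, Pi.single_apply]

lemma ev2_20_02 : phi2 ![2,3] (xg 0 * yg 2) = 0 := by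
  rw [phi2_xy]; simp (config := {decide := true}) [Xv, Yv, Pi.single_apply]

lemma ev2_20_10 : phi2 ![2,3] (xg 1 * yg 0) = 0 := by
  rw [phi2_xy]; simp (config := {decide := true}) [Xv, Yv, Pi.single_apply]

lemma ev2_20_11 : phi2 ![2,3] (xg 1 * yg 1) = 0 := by
  rw [phi2_xy]; simp (config := {decide := true}) [Xv, Yv, Pi.single_apply]

lemma ev2_20_12 : phi2 ![2,3] (xg 1 * yg 2) = 0 := by
  rw [phi2_xy]; simp (config := {decide := true}) [Xv, Yv, Pi.single_apply]

lemma ev2_20_20 : phi2 ![2,3] (xg 2 * yg 0) = 1 := by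
  rw [phi2_xy]; simp (config := {decide := true}) [Xv, Yv, Pi.single_apply]

lemma ev2_20_21 : phi2 ![2,3] (xg 2 * yg 1) = 0 := by
  rw [phi2_xy]; simp (config := {decide := true}) [Xv, Yv, Pi.single_apply]

lemma ev2_20_22 : phi2 ![2,3] (xg 2 * yg 2) = 0 := by
  rw [phi2_xy]; simp (config := {decide := true}) [Xv, Yv, Pi.single_apply]

lemma ev2_21_00 : phi2 ![2,4] (xg 0 * yg 0) = 0 := by
  rw [phi2_xy]; simp (config := {decide := true}) [Xv, Yv, Pi.single_apply]

lemma ev2_21_01 : phi2 ![2,4] (xg 0 * yg 1) = 0 := by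
  rw [phi2_xy]; simp (config := {decide := true}) [Xv, Yv, Pi.single_apply]

lemma ev2_21_02 : phi2 ![2,4] (xg 0 * yg 2) = 0 := by
  rw [phi2_xy]; simp (config := {decide := true}) [Xv, Yv, Pi.single_apply]

lemma ev2_21_10 : phi2 ![2,4] (xg 1 * yg 0) = 0 := by
  rw [phi2_xy]; simp (config := {decide := true}) [Xv, Yv, Pi.single_apply]

lemma ev2_21_11 : phi2 ![2,4] (xg 1 * yg 1) = 0 := by
  rw [phi2_xy]; simp (config := {decide := true}) [Xv, Yv, Pi.single_apply]

lemma ev2_21_12 : phi2 ![2,4] (xg 1 * yg 2) = 0 := by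
  rw [phi2_xy]; simp (config := {decide := true}) [Xv, Yv, Pi.single_apply]

lemma ev2_21_20 : phi2 ![2,4] (xg 2 * yg 0) = 0 := by
  rw [phi2_xy]; simp (config := {decide := true}) [Xv, Yv, Pi.single_apply]

lemma ev2_21_21 : phi2 ![2,4] (xg 2 * yg 1) = 1 := by
  rw [phi2_xy]; simp (config := {decide := true}) [Xv, Yv, Pi.single_apply]

lemma ev2_21_22 : phi2 ![2,4] (xg 2 * yg 2) = 0 := by
  rw [phi2_xy]; simp (config := {decide := true}) [Xv, Yv, Pi.single_apply]

set_option maxHeartbeats 2000000 in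
/-- `dim H^{1,1}(t) = dim ((ker δ_t ∩ Λ^{1,1}) / δ_t(Λ^{1,0}))` equals
`6` if `t = 0` and `5` otherwise. -/
theorem stmt8 (t11 t12 t21 t22 : ℂ) (del delta : Lam →ₗ[ℂ] Lam)
    (hdel : IsDel del) (hdelta : IsDelta t11 t12 t21 t22 delta) :
    ((t11, t12, t21, t22) = (0, 0, 0, 0) →
      quotDim (LinearMap.ker delta ⊓ bigraded 1 1) (Submodule.map delta (bigraded 1 0)) = 6) ∧
    ((t11, t12, t21, t22) ≠ (0, 0, 0, 0) →
      quotDim (LinearMap.ker delta ⊓ bigraded 1 1) (Submodule.map delta (bigraded 1 0)) = 5) := by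
  obtain ⟨hLz, hx0, hx1, hx2, hy0, hy1, hy2⟩ := hdelta
  have hL : ∀ (u : Fin 6 → ℂ) (b : Lam),
      delta (ι ℂ u * b) = delta (ι ℂ u) * b - ι ℂ u * delta b := by
    intro u b
    have h := hLz 1 (ι ℂ u) (by rw [degComp, pow_one]; exact ⟨u, rfl⟩) b
    rw [h]; simp [sub_eq_add_neg]
  have hLx : ∀ (i : Fin 3) (b : Lam),
      delta (xg i * b) = delta (xg i) * b - xg i * delta b :=
    fun i b => by rw [xg_def]; exact hL _ b
  have dm00 : delta (xg 0 * yg 0) = 0 := by rw [hLx, hx0, hy0]; simp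
  have dm10 : delta (xg 1 * yg 0) = 0 := by rw [hLx, hx1, hy0]; simp
  have dm01 : delta (xg 0 * yg 1) = 0 := by rw [hLx, hx0, hy1]; simp
  have dm11 : delta (xg 1 * yg 1) = 0 := by rw [hLx, hx1, hy1]; simp
  have dm02 : delta (xg 0 * yg 2) = xg 0 * (yg 0 * yg 1) := by
    rw [hLx, hx0, hy2]; simp
  have dm12 : delta (xg 1 * yg 2) = xg 1 * (yg 0 * yg 1) := by
    rw [hLx, hx1, hy2]; simp
  have dm20 : delta (xg 2 * yg 0) =
      t12 • (xg 1 * (yg 0 * yg 1)) - t22 • (xg 0 * (yg 0 * yg 1)) := by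
    rw [hLx, hx2, hy0]
    simp only [add_mul, sub_mul, smul_mul_assoc, mul_assoc, yg_sq, yg_swap,
      mul_neg, mul_zero, smul_zero, smul_neg, sub_zero, zero_sub, mul_one]
    module
  have dm21 : delta (xg 2 * yg 1) =
      t21 • (xg 0 * (yg 0 * yg 1)) - t11 • (xg 1 * (yg 0 * yg 1)) := by
    rw [hLx, hx2, hy1]
    simp only [add_mul, sub_mul, smul_mul_assoc, mul_assoc, yg_sq, yg_swap,
      mul_neg, mul_zero, smul_zero, smul_neg, sub_zero, zero_sub, mul_one]
    module
  have dm22 : delta (xg 2 * yg 2) =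
      t21 • (xg 0 * (yg 0 * yg 2)) - t11 • (xg 1 * (yg 0 * yg 2))
      + t22 • (xg 0 * (yg 1 * yg 2)) - t12 • (xg 1 * (yg 1 * yg 2))
      + xg 2 * (yg 0 * yg 1) := by
    rw [hLx, hx2, hy2]
    simp only [add_mul, sub_mul, smul_mul_assoc, mul_assoc, yg_sq, yg_swap,
      mul_neg, mul_zero, smul_zero, smul_neg, sub_zero, zero_sub, mul_one, neg_neg]
    module
  -- kernel description
  have hK : (LinearMap.ker delta ⊓ bigraded 1 1 : Submodule ℂ Lam)
      = Submodule.span ℂ (Set.range (vl t11 t12 t21 t22)) := by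
    apply le_antisymm
    · rintro a ha
      obtain ⟨hker, hbig⟩ := Submodule.mem_inf.mp ha
      rw [bigraded11, Submodule.mem_span_range_iff_exists_fun] at hbig
      obtain ⟨c, hc⟩ := hbig
      have h0 : delta a = 0 := LinearMap.mem_ker.mp hker
      have hsum : (0 : Lam) = ∑ p : Fin 3 × Fin 3, c p • delta (xg p.1 * yg p.2) := by
        rw [← h0, ← hc, map_sum]
        exact Finset.sum_congr rfl fun p _ => map_smul _ _ _
      rw [Fintype.sum_prod_type] at hsum
      simp only [Fin.sum_univ_three, dm00, dm10, dm01, dm11, dm02, dm12, dm20, dm21,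
        dm22, smul_zero, add_zero, zero_add] at hsum
      have e3 : c (2,2) = 0 := by
        have h := congrArg (phi3 ![2,3,4]) hsum
        simp only [map_zero, map_add, map_sub, map_smul, map_neg, smul_eq_mul,
          ev3_2_001, ev3_2_101, ev3_2_201, ev3_2_002, ev3_2_102, ev3_2_012, ev3_2_112,
          mul_zero, mul_one, add_zero, zero_add, sub_zero, zero_sub] at h
        exact h.symm
      rw [e3, zero_smul, add_zero] at hsum
      have e1 : c (0,2) = t22 * c (2,0) - t21 * c (2,1) := by
        have h := congrArg (phi3 ![0,3,4]) hsum
        simp only [map_zero, map_add, map_sub, map_smul, map_neg, smul_eq_mul,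
          ev3_0_001, ev3_0_101, ev3_0_201, ev3_0_002, ev3_0_102, ev3_0_012, ev3_0_112,
          mul_zero, mul_one, add_zero, zero_add, sub_zero, zero_sub] at h
        linear_combination -h
      have e2 : c (1,2) = t11 * c (2,1) - t12 * c (2,0) := by
        have h := congrArg (phi3 ![1,3,4]) hsum
        simp only [map_zero, map_add, map_sub, map_smul, map_neg, smul_eq_mul,
          ev3_1_001, ev3_1_101, ev3_1_201, ev3_1_002, ev3_1_102, ev3_1_012, ev3_1_112,
          mul_zero, mul_one, add_zero, zero_add, sub_zero, zero_sub] at h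
        linear_combination -h
      have hfin : a = c (0,0) • (xg 0 * yg 0) + c (1,0) • (xg 1 * yg 0)
          + c (0,1) • (xg 0 * yg 1) + c (1,1) • (xg 1 * yg 1)
          + c (2,0) • (xg 2 * yg 0 + t22 • (xg 0 * yg 2) - t12 • (xg 1 * yg 2))
          + c (2,1) • (xg 2 * yg 1 - t21 • (xg 0 * yg 2) + t11 • (xg 1 * yg 2)) := by
        rw [← hc, Fintype.sum_prod_type]
        simp only [Fin.sum_univ_three, e1, e2, e3]
        module
      rw [hfin]
      have sp : ∀ k : Fin 6, vl t11 t12 t21 t22 k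
          ∈ Submodule.span ℂ (Set.range (vl t11 t12 t21 t22)) :=
        fun k => Submodule.subset_span ⟨k, rfl⟩
      exact add_mem (add_mem (add_mem (add_mem (add_mem
        (Submodule.smul_mem _ _ (sp 0)) (Submodule.smul_mem _ _ (sp 1)))
        (Submodule.smul_mem _ _ (sp 2))) (Submodule.smul_mem _ _ (sp 3)))
        (Submodule.smul_mem _ _ (sp 4))) (Submodule.smul_mem _ _ (sp 5))
    · rw [Submodule.span_le]
      rintro _ ⟨k, rfl⟩
      refine Submodule.mem_inf.mpr ⟨LinearMap.mem_ker.mpr ?_, ?_⟩ <;> fin_cases k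
      · exact dm00
      · exact dm10
      · exact dm01
      · exact dm11
      · show delta (xg 2 * yg 0 + t22 • (xg 0 * yg 2) - t12 • (xg 1 * yg 2)) = 0
        simp only [map_add, map_sub, map_smul, dm20, dm02, dm12]
        module
      · show delta (xg 2 * yg 1 - t21 • (xg 0 * yg 2) + t11 • (xg 1 * yg 2)) = 0
        simp only [map_add, map_sub, map_smul, dm21, dm02, dm12]
        module
      · exact mem_b11 0 0
      · exact mem_b11 1 0
      · exact mem_b11 0 1
      · exact mem_b11 1 1
      · show xg 2 * yg 0 + t22 • (xg 0 * yg 2) - t12 • (xg 1 * yg 2) ∈ bigraded 1 1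
        exact sub_mem (add_mem (mem_b11 2 0) (Submodule.smul_mem _ _ (mem_b11 0 2)))
          (Submodule.smul_mem _ _ (mem_b11 1 2))
      · show xg 2 * yg 1 - t21 • (xg 0 * yg 2) + t11 • (xg 1 * yg 2) ∈ bigraded 1 1
        exact add_mem (sub_mem (mem_b11 2 1) (Submodule.smul_mem _ _ (mem_b11 0 2)))
          (Submodule.smul_mem _ _ (mem_b11 1 2))
  -- linear independence of the six kernel elements
  have hind : LinearIndependent ℂ (vl t11 t12 t21 t22) := by
    rw [Fintype.linearIndependent_iff]
    intro g hg
    have hg' : g 0 • (xg 0 * yg 0) + g 1 • (xg 1 * yg 0) + g 2 • (xg 0 * yg 1)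
        + g 3 • (xg 1 * yg 1)
        + g 4 • (xg 2 * yg 0 + t22 • (xg 0 * yg 2) - t12 • (xg 1 * yg 2))
        + g 5 • (xg 2 * yg 1 - t21 • (xg 0 * yg 2) + t11 • (xg 1 * yg 2)) = 0 := by
      rw [← hg, Fin.sum_univ_six]
      rfl
    have h1 := congrArg (phi2 ![0,3]) hg'
    simp only [map_add, map_sub, map_smul, map_zero, smul_eq_mul,
      ev2_00_00, ev2_00_10, ev2_00_01, ev2_00_11, ev2_00_20, ev2_00_21,
      ev2_00_02, ev2_00_12, mul_zero, mul_one, add_zero, zero_add, sub_zero,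
      zero_sub, neg_zero] at h1
    have h2 := congrArg (phi2 ![1,3]) hg'
    simp only [map_add, map_sub, map_smul, map_zero, smul_eq_mul,
      ev2_10_00, ev2_10_10, ev2_10_01, ev2_10_11, ev2_10_20, ev2_10_21,
      ev2_10_02, ev2_10_12, mul_zero, mul_one, add_zero, zero_add, sub_zero,
      zero_sub, neg_zero] at h2
    have h3 := congrArg (phi2 ![0,4]) hg'
    simp only [map_add, map_sub, map_smul, map_zero, smul_eq_mul,
      ev2_01_00, ev2_01_10, ev2_01_01, ev2_01_11, ev2_01_20, ev2_01_21,
      ev2_01_02, ev2_01_12, mul_zero, mul_one, add_zero, zero_add, sub_zero,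
      zero_sub, neg_zero] at h3
    have h4 := congrArg (phi2 ![1,4]) hg'
    simp only [map_add, map_sub, map_smul, map_zero, smul_eq_mul,
      ev2_11_00, ev2_11_10, ev2_11_01, ev2_11_11, ev2_11_20, ev2_11_21,
      ev2_11_02, ev2_11_12, mul_zero, mul_one, add_zero, zero_add, sub_zero,
      zero_sub, neg_zero] at h4
    have h5 := congrArg (phi2 ![2,3]) hg'
    simp only [map_add, map_sub, map_smul, map_zero, smul_eq_mul,
      ev2_20_00, ev2_20_10, ev2_20_01, ev2_20_11, ev2_20_20, ev2_20_21,
      ev2_20_02, ev2_20_12, mul_zero, mul_one, add_zero, zero_add, sub_zero,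
      zero_sub, neg_zero] at h5
    have h6 := congrArg (phi2 ![2,4]) hg'
    simp only [map_add, map_sub, map_smul, map_zero, smul_eq_mul,
      ev2_21_00, ev2_21_10, ev2_21_01, ev2_21_11, ev2_21_20, ev2_21_21,
      ev2_21_02, ev2_21_12, mul_zero, mul_one, add_zero, zero_add, sub_zero,
      zero_sub, neg_zero] at h6
    intro k
    fin_cases k
    · exact h1
    · exact h2
    · exact h3
    · exact h4
    · exact h5
    · exact h6
  have hrank : Module.finrank ℂ
      ↥(LinearMap.ker delta ⊓ bigraded 1 1 : Submodule ℂ Lam) = 6 := by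
    rw [hK, finrank_span_eq_card hind]
    simp
  haveI hfd : FiniteDimensional ℂ
      ↥(LinearMap.ker delta ⊓ bigraded 1 1 : Submodule ℂ Lam) := by
    rw [hK]
    exact FiniteDimensional.span_of_finite ℂ (Set.finite_range _)
  have hquot := Submodule.finrank_quotient_add_finrank
    (Submodule.comap (LinearMap.ker delta ⊓ bigraded 1 1 :
      Submodule ℂ Lam).subtype (Submodule.map delta (bigraded 1 0)))
  constructor
  · intro h
    rw [Prod.ext_iff, Prod.ext_iff, Prod.ext_iff] at h
    obtain ⟨h11, h12, h21, h22⟩ : t11 = 0 ∧ t12 = 0 ∧ t21 = 0 ∧ t22 = 0 := by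
      exact ⟨h.1, h.2.1, h.2.2.1, h.2.2.2⟩
    subst h11; subst h12; subst h21; subst h22
    have hx2' : delta (xg 2) = 0 := by rw [hx2]; simp
    have hI : Submodule.map delta (bigraded 1 0) = ⊥ := by
      rw [bigraded10, Submodule.map_span, Submodule.span_eq_bot]
      rintro _ ⟨_, ⟨i, rfl⟩, rfl⟩
      fin_cases i
      · exact hx0
      · exact hx1
      · exact hx2'
    rw [quotDim, hI]
    have hcb : Submodule.comap (LinearMap.ker delta ⊓ bigraded 1 1 :
        Submodule ℂ Lam).subtype (⊥ : Submodule ℂ Lam) = ⊥ := by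
      simp
    rw [hcb]
    rw [(Submodule.quotEquivOfEqBot _ rfl).finrank_eq]
    exact hrank
  · intro hne
    have hvne : delta (xg 2) ≠ 0 := by
      intro h
      apply hne
      have hE : t21 • (xg 0 * yg 0) - t11 • (xg 1 * yg 0)
          + t22 • (xg 0 * yg 1) - t12 • (xg 1 * yg 1) = 0 := by rw [← hx2, h]
      have h1 := congrArg (phi2 ![0,3]) hE
      simp only [map_add, map_sub, map_smul, map_zero, smul_eq_mul,
        ev2_00_00, ev2_00_10, ev2_00_01, ev2_00_11, mul_zero, mul_one,
        add_zero, zero_add, sub_zero, zero_sub, neg_eq_zero] at h1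
      have h2 := congrArg (phi2 ![1,3]) hE
      simp only [map_add, map_sub, map_smul, map_zero, smul_eq_mul,
        ev2_10_00, ev2_10_10, ev2_10_01, ev2_10_11, mul_zero, mul_one,
        add_zero, zero_add, sub_zero, zero_sub, neg_eq_zero] at h2
      have h3 := congrArg (phi2 ![0,4]) hE
      simp only [map_add, map_sub, map_smul, map_zero, smul_eq_mul,
        ev2_01_00, ev2_01_10, ev2_01_01, ev2_01_11, mul_zero, mul_one,
        add_zero, zero_add, sub_zero, zero_sub, neg_eq_zero] at h3
      have h4 := congrArg (phi2 ![1,4]) hE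
      simp only [map_add, map_sub, map_smul, map_zero, smul_eq_mul,
        ev2_11_00, ev2_11_10, ev2_11_01, ev2_11_11, mul_zero, mul_one,
        add_zero, zero_add, sub_zero, zero_sub, neg_eq_zero] at h4
      simp only [Prod.ext_iff]
      exact ⟨h2, h4, h1, h3⟩
    have hI : Submodule.map delta (bigraded 1 0)
        = Submodule.span ℂ {delta (xg 2)} := by
      rw [bigraded10, Submodule.map_span]
      apply le_antisymm
      · rw [Submodule.span_le]
        rintro _ ⟨_, ⟨i, rfl⟩, rfl⟩
        fin_cases i
        · show delta (xg 0) ∈ _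
          rw [hx0]; exact zero_mem _
        · show delta (xg 1) ∈ _
          rw [hx1]; exact zero_mem _
        · exact Submodule.mem_span_singleton_self _
      · rw [Submodule.span_le, Set.singleton_subset_iff]
        exact Submodule.subset_span ⟨xg 2, ⟨2, rfl⟩, rfl⟩
    have hIK : Submodule.map delta (bigraded 1 0)
        ≤ (LinearMap.ker delta ⊓ bigraded 1 1 : Submodule ℂ Lam) := by
      rw [hI, Submodule.span_le, Set.singleton_subset_iff]
      refine Submodule.mem_inf.mpr ⟨LinearMap.mem_ker.mpr ?_, ?_⟩
      · rw [hx2]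
        simp only [map_add, map_sub, map_smul, dm00, dm10, dm01, dm11]
        simp
      · rw [hx2]
        exact sub_mem (add_mem (sub_mem (Submodule.smul_mem _ _ (mem_b11 0 0))
          (Submodule.smul_mem _ _ (mem_b11 1 0)))
          (Submodule.smul_mem _ _ (mem_b11 0 1)))
          (Submodule.smul_mem _ _ (mem_b11 1 1))
    have hJ : Module.finrank ℂ
        ↥(Submodule.comap (LinearMap.ker delta ⊓ bigraded 1 1 :
          Submodule ℂ Lam).subtype (Submodule.map delta (bigraded 1 0))) = 1 := by
      rw [(Submodule.comapSubtypeEquivOfLe hIK).finrank_eq, hI,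
        finrank_span_singleton hvne]
    rw [quotDim]
    omega
end
end

section
/- For every t ∈ ℂ⁴, the dimension of the deformed Dolbeault cohomology H^{1,3}(t) = Λ^{1,3} / δ_t(Λ^{1,2}) equals 3 if (t₁₁,t₁₂,t₂₁,t₂₂) = (0,0,0,0); equals 2 if (t₁₁,t₁₂,t₂₁,t₂₂) ≠ 0 and D(t) = 0; and equals 1 if D(t) ≠ 0. (Note that Λ^{1,3} = ker(δ_t) ∩ Λ^{1,3} since Λ^{1,4} = 0.) -/
noncomputable section

open ExteriorAlgebra

/-! functionals -/
def E (j : Fin 3) : Lam := xg j * (yg 0 * (yg 1 * yg 2))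
def vE (j : Fin 3) : Fin 4 → (Fin 6 → ℂ) :=
  ![Pi.single (Fin.castAdd 3 j) 1, Pi.single (Fin.natAdd 3 (0:Fin 3)) 1,
    Pi.single (Fin.natAdd 3 (1:Fin 3)) 1, Pi.single (Fin.natAdd 3 (2:Fin 3)) 1]
lemma E_eq (j : Fin 3) : E j = ιMulti ℂ 4 (vE j) := by
  rw [ιMulti_apply]
  simp [E, vE, xg, yg, List.ofFn_succ, mul_assoc]
def sel (i : Fin 3) : Fin 4 → Fin 6 := ![⟨i, by omega⟩, 3, 4, 5]
def fdet (i : Fin 3) : (Fin 6 → ℂ) [⋀^Fin 4]→ₗ[ℂ] ℂ :=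
  (Matrix.detRowAlternating).compLinearMap (LinearMap.funLeft ℂ ℂ (sel i))
def cf (i : Fin 3) : Lam →ₗ[ℂ] ℂ := liftAlternating (Pi.single 4 (fdet i))

lemma cf_E (i j : Fin 3) : cf i (E j) = if i = j then 1 else 0 := by
  rw [E_eq, cf, liftAlternating_apply_ιMulti, Pi.single_eq_same]
  simp only [fdet, AlternatingMap.compLinearMap_apply]
  have key : ∀ (M : Matrix (Fin 4) (Fin 4) ℂ), (Matrix.detRowAlternating M : ℂ) = M.det :=
    fun _ => rfl
  change Matrix.det _ = _
  by_cases h : i = j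
  · subst h
    rw [if_pos rfl]
    have hM : (fun a => (LinearMap.funLeft ℂ ℂ (sel i)) (vE i a)) = (1 : Matrix (Fin 4) (Fin 4) ℂ) := by
      funext a b
      fin_cases i <;> fin_cases a <;> fin_cases b <;>
        simp [sel, vE, LinearMap.funLeft, Pi.single_apply, Matrix.one_apply] <;> decide
    rw [hM, Matrix.det_one]
  · rw [if_neg h]
    apply Matrix.det_eq_zero_of_row_eq_zero 0
    intro b
    fin_cases i <;> fin_cases j <;> (try exact absurd rfl h) <;> fin_cases b <;>
      simp [sel, vE, LinearMap.funLeft, Pi.single_apply] <;> decide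

/-! independence of the E's -/
lemma linIndE : LinearIndependent ℂ ![E 0, E 1, E 2] := by
  rw [Fintype.linearIndependent_iff]
  intro g hg j
  have := congrArg (cf j) hg
  simp only [Fin.sum_univ_three, map_add, map_smul, map_zero,
    Matrix.cons_val_zero, Matrix.cons_val_one, Matrix.head_cons,
    Matrix.cons_val_two, Matrix.tail_cons, cf_E, smul_eq_mul] at this
  fin_cases j <;> simpa using this

/-! algebra computations -/
lemma ysq (a : Fin 3) : yg a * yg a = 0 := ι_sq_zero _
lemma yaa (a : Fin 3) (z : Lam) : yg a * (yg a * z) = 0 := by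
  rw [← mul_assoc, ysq, zero_mul]
lemma yaa' (a : Fin 3) : yg a * (yg a * (1:Lam)) = 0 := yaa a 1
lemma yswap (a b : Fin 3) : yg a * yg b = -(yg b * yg a) :=
  eq_neg_of_add_eq_zero_left (ι_add_mul_swap _ _)
lemma y10 (z : Lam) : yg 1 * (yg 0 * z) = -(yg 0 * (yg 1 * z)) := by
  rw [← mul_assoc, yswap 1 0, neg_mul, mul_assoc]

lemma mem_deg1 (m : Fin 6 → ℂ) : ExteriorAlgebra.ι ℂ m ∈ degComp 1 := by
  rw [degComp, pow_one]; exact ⟨m, rfl⟩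
lemma xg_deg1 (i : Fin 3) : xg i ∈ degComp 1 := mem_deg1 _
lemma yg_deg1 (j : Fin 3) : yg j ∈ degComp 1 := mem_deg1 _

variable {t11 t12 t21 t22 : ℂ} {delta : Lam →ₗ[ℂ] Lam}

lemma leib (h : IsDelta t11 t12 t21 t22 delta) (a : Lam) (ha : a ∈ degComp 1) (b : Lam) :
    delta (a * b) = delta a * b - a * delta b := by
  rw [h.1 1 a ha b, pow_one, neg_smul, one_smul, sub_eq_add_neg]

lemma dyy01 (h : IsDelta t11 t12 t21 t22 delta) : delta (yg 0 * yg 1) = 0 := by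
  rw [leib h _ (yg_deg1 0), h.2.2.2.2.1, h.2.2.2.2.2.1]; simp
lemma dyy02 (h : IsDelta t11 t12 t21 t22 delta) : delta (yg 0 * yg 2) = 0 := by
  rw [leib h _ (yg_deg1 0), h.2.2.2.2.1, h.2.2.2.2.2.2]
  simp [mul_neg, yaa]
lemma dyy12 (h : IsDelta t11 t12 t21 t22 delta) : delta (yg 1 * yg 2) = 0 := by
  rw [leib h _ (yg_deg1 1), h.2.2.2.2.2.1, h.2.2.2.2.2.2]
  simp [mul_neg, y10, yaa, ysq]

lemma dxw (h : IsDelta t11 t12 t21 t22 delta) (i : Fin 3) (w : Lam) (hw : delta w = 0) :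
    delta (xg i * w) = delta (xg i) * w := by
  rw [leib h _ (xg_deg1 i), hw, mul_zero, sub_zero]

lemma d_x0w (h : IsDelta t11 t12 t21 t22 delta) (w : Lam) (hw : delta w = 0) :
    delta (xg 0 * w) = 0 := by rw [dxw h _ _ hw, h.2.1, zero_mul]
lemma d_x1w (h : IsDelta t11 t12 t21 t22 delta) (w : Lam) (hw : delta w = 0) :
    delta (xg 1 * w) = 0 := by rw [dxw h _ _ hw, h.2.2.1, zero_mul]

lemma d_x2_01 (h : IsDelta t11 t12 t21 t22 delta) :
    delta (xg 2 * (yg 0 * yg 1)) = 0 := by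
  rw [dxw h _ _ (dyy01 h), h.2.2.2.1]
  simp [add_mul, sub_mul, smul_mul_assoc, mul_assoc, yaa, y10, ysq]
lemma d_x2_02 (h : IsDelta t11 t12 t21 t22 delta) :
    delta (xg 2 * (yg 0 * yg 2)) = (-t22) • E 0 + t12 • E 1 := by
  rw [dxw h _ _ (dyy02 h), h.2.2.2.1]
  simp only [add_mul, sub_mul, smul_mul_assoc, mul_assoc, yaa, y10, mul_zero, mul_neg,
    smul_zero, smul_neg, zero_sub, zero_add, E]
  module
lemma d_x2_12 (h : IsDelta t11 t12 t21 t22 delta) :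
    delta (xg 2 * (yg 1 * yg 2)) = t21 • E 0 + (-t11) • E 1 := by
  rw [dxw h _ _ (dyy12 h), h.2.2.2.1]
  simp only [add_mul, sub_mul, smul_mul_assoc, mul_assoc, yaa, y10, mul_zero, mul_neg,
    smul_zero, smul_neg, zero_sub, zero_add, E]
  module

lemma sort_pair {a b : Fin 3} (hab : a < b) :
    Finset.sort ({a, b} : Finset (Fin 3)) (· ≤ ·) = [a, b] := by
  have h1 : ∀ c ∈ ({b} : Finset (Fin 3)), a ≤ c := by
    intro c hc; simp only [Finset.mem_singleton] at hc; exact hc ▸ hab.le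
  have h2 : a ∉ ({b} : Finset (Fin 3)) := by simp [hab.ne]
  have := Finset.sort_insert (r := (· ≤ ·)) h1 h2
  rw [Finset.sort_singleton] at this
  exact this
lemma sort_univ3 :
    Finset.sort ({0, 1, 2} : Finset (Fin 3)) (· ≤ ·) = [0, 1, 2] := by
  have h1 : ∀ c ∈ ({1, 2} : Finset (Fin 3)), (0 : Fin 3) ≤ c := by decide
  have h2 : (0 : Fin 3) ∉ ({1, 2} : Finset (Fin 3)) := by decide
  have := Finset.sort_insert (r := (· ≤ ·)) h1 h2
  rw [sort_pair (by decide)] at this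
  exact this

/-! monomial evaluations -/
lemma mon01 (i : Fin 3) : monom {i} {0,1} = xg i * (yg 0 * yg 1) := by
  have h1 : Finset.sort ({i} : Finset (Fin 3)) (· ≤ ·) = [i] := Finset.sort_singleton _ _
  have h2 : Finset.sort ({0,1} : Finset (Fin 3)) (· ≤ ·) = [0,1] := sort_pair (by decide)
  rw [monom, h1, h2]; simp [mul_assoc]
lemma mon02 (i : Fin 3) : monom {i} {0,2} = xg i * (yg 0 * yg 2) := by
  have h1 : Finset.sort ({i} : Finset (Fin 3)) (· ≤ ·) = [i] := Finset.sort_singleton _ _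
  have h2 : Finset.sort ({0,2} : Finset (Fin 3)) (· ≤ ·) = [0,2] := sort_pair (by decide)
  rw [monom, h1, h2]; simp [mul_assoc]
lemma mon12 (i : Fin 3) : monom {i} {1,2} = xg i * (yg 1 * yg 2) := by
  have h1 : Finset.sort ({i} : Finset (Fin 3)) (· ≤ ·) = [i] := Finset.sort_singleton _ _
  have h2 : Finset.sort ({1,2} : Finset (Fin 3)) (· ≤ ·) = [1,2] := sort_pair (by decide)
  rw [monom, h1, h2]; simp [mul_assoc]
lemma mon012 (i : Fin 3) : monom {i} {0,1,2} = E i := by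
  have h1 : Finset.sort ({i} : Finset (Fin 3)) (· ≤ ·) = [i] := Finset.sort_singleton _ _
  have h2 : Finset.sort ({0,1,2} : Finset (Fin 3)) (· ≤ ·) = [0,1,2] := sort_univ3
  rw [monom, h1, h2]; simp [E, mul_assoc]

/-! the two spans -/
lemma hK13 : bigraded 1 3 = Submodule.span ℂ {E 0, E 1, E 2} := by
  rw [bigraded]
  congr 1
  ext m
  constructor
  · rintro ⟨s, u, hs, hu, rfl⟩
    have hs' : s.card = 1 := by exact_mod_cast hs
    have hu' : u.card = 3 := by exact_mod_cast hu
    have hS : s = {0} ∨ s = {1} ∨ s = {2} := by revert hs'; revert s; decide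
    have hU : u = {0,1,2} := by revert hu'; revert u; decide
    subst hU
    rcases hS with rfl | rfl | rfl <;> rw [mon012] <;> simp
  · intro hm
    simp only [Set.mem_insert_iff, Set.mem_singleton_iff] at hm
    rcases hm with rfl | rfl | rfl
    · exact ⟨{0}, {0,1,2}, by decide, by decide, (mon012 0).symm⟩
    · exact ⟨{1}, {0,1,2}, by decide, by decide, (mon012 1).symm⟩
    · exact ⟨{2}, {0,1,2}, by decide, by decide, (mon012 2).symm⟩

lemma hI12 (h : IsDelta t11 t12 t21 t22 delta) :
    Submodule.map delta (bigraded 1 2) =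
      Submodule.span ℂ {(-t22) • E 0 + t12 • E 1, t21 • E 0 + (-t11) • E 1} := by
  rw [bigraded, Submodule.map_span]
  apply le_antisymm
  · rw [Submodule.span_le]
    rintro _ ⟨m, ⟨s, u, hs, hu, rfl⟩, rfl⟩
    have hs' : s.card = 1 := by exact_mod_cast hs
    have hu' : u.card = 2 := by exact_mod_cast hu
    have hS : s = {0} ∨ s = {1} ∨ s = {2} := by revert hs'; revert s; decide
    have hU : u = {0,1} ∨ u = {0,2} ∨ u = {1,2} := by revert hu'; revert u; decide
    rcases hS with rfl | rfl | rfl <;> rcases hU with rfl | rfl | rfl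
    · rw [SetLike.mem_coe, mon01, d_x0w h _ (dyy01 h)]; exact zero_mem _
    · rw [SetLike.mem_coe, mon02, d_x0w h _ (dyy02 h)]; exact zero_mem _
    · rw [SetLike.mem_coe, mon12, d_x0w h _ (dyy12 h)]; exact zero_mem _
    · rw [SetLike.mem_coe, mon01, d_x1w h _ (dyy01 h)]; exact zero_mem _
    · rw [SetLike.mem_coe, mon02, d_x1w h _ (dyy02 h)]; exact zero_mem _
    · rw [SetLike.mem_coe, mon12, d_x1w h _ (dyy12 h)]; exact zero_mem _
    · rw [SetLike.mem_coe, mon01, d_x2_01 h]; exact zero_mem _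
    · rw [SetLike.mem_coe, mon02, d_x2_02 h]
      exact Submodule.subset_span (Set.mem_insert _ _)
    · rw [SetLike.mem_coe, mon12, d_x2_12 h]
      exact Submodule.subset_span (Set.mem_insert_of_mem _ rfl)
  · rw [Submodule.span_le]
    rintro z hz
    simp only [Set.mem_insert_iff, Set.mem_singleton_iff] at hz
    rcases hz with rfl | rfl
    · exact Submodule.subset_span
        ⟨monom {2} {0,2}, ⟨{2}, {0,2}, by decide, by decide, rfl⟩,
          by rw [mon02, d_x2_02 h]⟩
    · exact Submodule.subset_span
        ⟨monom {2} {1,2}, ⟨{2}, {1,2}, by decide, by decide, rfl⟩,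
          by rw [mon12, d_x2_12 h]⟩

/-! dimension computations -/
lemma range_vec3 (a b c : Lam) : Set.range ![a, b, c] = {a, b, c} := by
  ext z
  constructor
  · rintro ⟨i, rfl⟩; fin_cases i <;> simp
  · rintro (rfl | rfl | rfl)
    exacts [⟨0, rfl⟩, ⟨1, rfl⟩, ⟨2, rfl⟩]

lemma range_vec2 (a b : Lam) : Set.range ![a, b] = {a, b} := by
  ext z
  constructor
  · rintro ⟨i, rfl⟩; fin_cases i <;> simp
  · rintro (rfl | rfl)
    exacts [⟨0, rfl⟩, ⟨1, rfl⟩]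

lemma frK : Module.finrank ℂ (bigraded 1 3) = 3 := by
  rw [hK13, ← range_vec3, finrank_span_eq_card linIndE]
  simp

lemma quot_eq (K I : Submodule ℂ Lam) (hle : I ≤ K) [FiniteDimensional ℂ K] :
    quotDim K I + Module.finrank ℂ I = Module.finrank ℂ K := by
  rw [quotDim, ← (Submodule.comapSubtypeEquivOfLe hle).finrank_eq]
  exact Submodule.finrank_quotient_add_finrank _

lemma cf_v (i : Fin 3) (a b : ℂ) : cf i (a • E 0 + b • E 1) =
    a * (if i = 0 then 1 else 0) + b * (if i = 1 then 1 else 0) := by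
  simp [map_add, map_smul, cf_E]

lemma v_ne_zero {a b : ℂ} (h : a ≠ 0 ∨ b ≠ 0) : a • E 0 + b • E 1 ≠ 0 := by
  intro hz
  rcases h with h | h
  · have := congrArg (cf 0) hz; rw [cf_v] at this; simp at this; exact h this
  · have := congrArg (cf 1) hz; rw [cf_v] at this; simp at this; exact h this

lemma indep_v (hD : t11 * t22 - t21 * t12 ≠ 0) :
    LinearIndependent ℂ ![(-t22) • E 0 + t12 • E 1, t21 • E 0 + (-t11) • E 1] := by
  rw [LinearIndependent.pair_iff]
  intro s t hst
  have e0 := congrArg (cf 0) hst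
  have e1 := congrArg (cf 1) hst
  simp only [map_add, map_smul, cf_E, map_zero, smul_eq_mul] at e0 e1
  norm_num at e0 e1
  constructor
  · have hs : s * (t11 * t22 - t21 * t12) = 0 := by linear_combination (-t11) * e0 - t21 * e1
    exact (mul_eq_zero.mp hs).resolve_right hD
  · have ht : t * (t11 * t22 - t21 * t12) = 0 := by linear_combination (-t12) * e0 - t22 * e1
    exact (mul_eq_zero.mp ht).resolve_right hD

lemma mem_spanE (a b : ℂ) :
    a • E 0 + b • E 1 ∈ Submodule.span ℂ ({E 0, E 1, E 2} : Set Lam) :=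
  add_mem (Submodule.smul_mem _ _ (Submodule.subset_span (by simp)))
    (Submodule.smul_mem _ _ (Submodule.subset_span (by simp)))

lemma span_pair_of_snd_smul {v w : Lam} (c : ℂ) (hw : w = c • v) :
    Submodule.span ℂ {v, w} = Submodule.span ℂ {v} := by
  rw [Set.pair_comm]
  exact Submodule.span_insert_eq_span (Submodule.mem_span_singleton.mpr ⟨c, hw.symm⟩)

lemma fr_rank1 (hne : ¬(t11 = 0 ∧ t12 = 0 ∧ t21 = 0 ∧ t22 = 0))
    (hD : t11 * t22 - t21 * t12 = 0) :
    Module.finrank ℂ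
      (Submodule.span ℂ {(-t22) • E 0 + t12 • E 1, t21 • E 0 + (-t11) • E 1}) = 1 := by
  by_cases h1 : t22 ≠ 0 ∨ t12 ≠ 0
  · have hv1 : (-t22) • E 0 + t12 • E 1 ≠ 0 := by
      refine v_ne_zero ?_
      rcases h1 with h | h
      · exact Or.inl (neg_ne_zero.mpr h)
      · exact Or.inr h
    rcases h1 with h | h
    · have hc : t21 • E 0 + (-t11) • E 1 = (-(t21/t22)) • ((-t22) • E 0 + t12 • E 1) := by
        match_scalars
        · field_simp
        · field_simp
          linear_combination -hD
      rw [span_pair_of_snd_smul _ hc, finrank_span_singleton hv1]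
    · have hc : t21 • E 0 + (-t11) • E 1 = (-(t11/t12)) • ((-t22) • E 0 + t12 • E 1) := by
        match_scalars
        · field_simp
          linear_combination -hD
        · field_simp
      rw [span_pair_of_snd_smul _ hc, finrank_span_singleton hv1]
  · push_neg at h1
    obtain ⟨h22, h12⟩ := h1
    subst h22; subst h12
    have hv2 : t21 • E 0 + (-t11) • E 1 ≠ 0 := by
      refine v_ne_zero ?_
      by_cases h21 : t21 = 0
      · subst h21
        simp only [eq_self_iff_true, true_and] at hne
        exact Or.inr (neg_ne_zero.mpr (by tauto))
      · exact Or.inl h21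
    have hz : ((-(0:ℂ)) • E 0 + (0:ℂ) • E 1 : Lam) = 0 := by simp
    rw [hz, show ({(0 : Lam), t21 • E 0 + (-t11) • E 1} : Set Lam)
        = insert 0 {t21 • E 0 + (-t11) • E 1} from rfl,
      Submodule.span_insert_zero, finrank_span_singleton hv2]


theorem stmt12_aux (t11 t12 t21 t22 : ℂ) (delta : Lam →ₗ[ℂ] Lam)
    (hdelta : IsDelta t11 t12 t21 t22 delta) :
    ((t11, t12, t21, t22) = (0, 0, 0, 0) →
      quotDim (bigraded 1 3) (Submodule.map delta (bigraded 1 2)) = 3) ∧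
    ((t11, t12, t21, t22) ≠ (0, 0, 0, 0) → t11 * t22 - t21 * t12 = 0 →
      quotDim (bigraded 1 3) (Submodule.map delta (bigraded 1 2)) = 2) ∧
    (t11 * t22 - t21 * t12 ≠ 0 →
      quotDim (bigraded 1 3) (Submodule.map delta (bigraded 1 2)) = 1) := by
  have h := hdelta
  haveI : FiniteDimensional ℂ (bigraded 1 3) := by
    rw [hK13]; exact FiniteDimensional.span_of_finite ℂ (Set.toFinite _)
  have hle : Submodule.map delta (bigraded 1 2) ≤ bigraded 1 3 := by
    rw [hI12 h, hK13, Submodule.span_le]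
    rintro z hz
    simp only [Set.mem_insert_iff, Set.mem_singleton_iff] at hz
    rcases hz with rfl | rfl <;> exact mem_spanE _ _
  have key := quot_eq _ _ hle
  rw [frK, hI12 h] at key
  refine ⟨?_, ?_, ?_⟩
  · intro ht
    simp only [Prod.mk.injEq] at ht
    obtain ⟨rfl, rfl, rfl, rfl⟩ := ht
    rw [hI12 h]
    have hz : Submodule.span ℂ
        ({(-(0:ℂ)) • E 0 + (0:ℂ) • E 1, (0:ℂ) • E 0 + (-(0:ℂ)) • E 1} : Set Lam) = ⊥ := by
      simp
    rw [hz] at key ⊢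
    rw [finrank_bot] at key
    omega
  · intro hne hD
    have hne' : ¬(t11 = 0 ∧ t12 = 0 ∧ t21 = 0 ∧ t22 = 0) := by
      simpa [Prod.mk.injEq] using hne
    rw [hI12 h]
    rw [fr_rank1 hne' hD] at key
    omega
  · intro hD
    rw [hI12 h]
    have h2 : Module.finrank ℂ (Submodule.span ℂ
        {(-t22) • E 0 + t12 • E 1, t21 • E 0 + (-t11) • E 1}) = 2 := by
      rw [← range_vec2, finrank_span_eq_card (indep_v hD)]
      simp
    rw [h2] at key
    omega

/-- `dim H^{1,3}(t) = dim (Λ^{1,3} / δ_t(Λ^{1,2}))` equals `3` if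
`t = 0`; `2` if `t ≠ 0` and `D(t) = 0`; and `1` if `D(t) ≠ 0`. -/
theorem stmt12 (t11 t12 t21 t22 : ℂ) (del delta : Lam →ₗ[ℂ] Lam)
    (hdel : IsDel del) (hdelta : IsDelta t11 t12 t21 t22 delta) :
    ((t11, t12, t21, t22) = (0, 0, 0, 0) →
      quotDim (bigraded 1 3) (Submodule.map delta (bigraded 1 2)) = 3) ∧
    ((t11, t12, t21, t22) ≠ (0, 0, 0, 0) → t11 * t22 - t21 * t12 = 0 →
      quotDim (bigraded 1 3) (Submodule.map delta (bigraded 1 2)) = 2) ∧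
    (t11 * t22 - t21 * t12 ≠ 0 →
      quotDim (bigraded 1 3) (Submodule.map delta (bigraded 1 2)) = 1) :=
  stmt12_aux t11 t12 t21 t22 delta hdelta
end
end

section
/- For every t ∈ ℂ⁴, the dimension of the deformed Bott–Chern cohomology H_BC^{2,2}(t) = (ker(∂) ∩ ker(δ_t) ∩ Λ^{2,2}) / ∂(δ_t(Λ^{1,1})) equals 8 if (t₁₁,t₁₂,t₂₁,t₂₂) = (0,0,0,0) and equals 7 otherwise. -/
noncomputable section

open ExteriorAlgebra

/-! ### Auxiliary machinery -/

/-- generic generator -/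
def gG (i : Fin 6) : Lam := ExteriorAlgebra.ι ℂ (Pi.single i 1)

@[simp] lemma xg0 : xg 0 = gG 0 := rfl
@[simp] lemma xg1 : xg 1 = gG 1 := rfl
@[simp] lemma xg2 : xg 2 = gG 2 := rfl
@[simp] lemma yg0 : yg 0 = gG 3 := rfl
@[simp] lemma yg1 : yg 1 = gG 4 := rfl
@[simp] lemma yg2 : yg 2 = gG 5 := rfl

def emon (n : ℕ) (a : Fin n → Fin 6) : Lam :=
  ExteriorAlgebra.ιMulti ℂ n (fun i => Pi.single (a i) 1)

def detA (n : ℕ) (b : Fin n → Fin 6) : (Fin 6 → ℂ) [⋀^Fin n]→ₗ[ℂ] ℂ :=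
  Matrix.detRowAlternating.compLinearMap (LinearMap.funLeft ℂ ℂ b)

def fam (n : ℕ) (b : Fin n → Fin 6) : ∀ i : ℕ, (Fin 6 → ℂ) [⋀^Fin i]→ₗ[ℂ] ℂ :=
  fun i => if h : i = n then h ▸ detA n b else 0

def phi (n : ℕ) (b : Fin n → Fin 6) : Lam →ₗ[ℂ] ℂ := liftAlternating (fam n b)

lemma phi_emon (n : ℕ) (a b : Fin n → Fin 6) :
    phi n b (emon n a) = Matrix.det (fun i j => (Pi.single (a i) 1 : Fin 6 → ℂ) (b j)) := by
  rw [phi, emon, liftAlternating_apply_ιMulti]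
  simp [fam, detA, Matrix.detRowAlternating]
  rfl

lemma phi_emon_self (n : ℕ) (a : Fin n → Fin 6) (h : Function.Injective a) :
    phi n a (emon n a) = 1 := by
  rw [phi_emon]
  have : (fun i j => (Pi.single (a i) 1 : Fin 6 → ℂ) (a j)) = (1 : Matrix (Fin n) (Fin n) ℂ) := by
    ext i j
    rw [Pi.single_apply, Matrix.one_apply]
    simp [h.eq_iff, eq_comm]
  rw [this, Matrix.det_one]

lemma phi_emon_ne (n : ℕ) (a b : Fin n → Fin 6) (h : ∃ r, ∀ j, a r ≠ b j) :
    phi n b (emon n a) = 0 := by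
  rw [phi_emon]
  obtain ⟨r, hr⟩ := h
  apply Matrix.det_eq_zero_of_row_eq_zero r
  intro j
  simp [Pi.single_apply, (hr j).symm]

lemma emon_four (a : Fin 4 → Fin 6) :
    emon 4 a = gG (a 0) * (gG (a 1) * (gG (a 2) * gG (a 3))) := by
  rw [emon, ExteriorAlgebra.ιMulti_apply]
  simp [List.ofFn_succ, gG, show (Fin.succ 2 : Fin 4) = 3 by decide]

lemma emon_five (a : Fin 5 → Fin 6) :
    emon 5 a = gG (a 0) * (gG (a 1) * (gG (a 2) * (gG (a 3) * gG (a 4)))) := by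
  rw [emon, ExteriorAlgebra.ιMulti_apply]
  simp [List.ofFn_succ, gG, show (Fin.succ 2 : Fin 5) = 3 by decide,
    show ((Fin.succ 2).succ : Fin 5) = 4 by decide]

def xpr : Fin 3 → Fin 2 → Fin 6 := ![![0,1],![0,2],![1,2]]
def ypr : Fin 3 → Fin 2 → Fin 6 := ![![3,4],![3,5],![4,5]]
def A : Fin 3 × Fin 3 → Fin 4 → Fin 6 :=
  fun p => ![xpr p.1 0, xpr p.1 1, ypr p.2 0, ypr p.2 1]

lemma A_inj : ∀ p, Function.Injective (A p) := by decide
lemma A_ne : ∀ p q : Fin 3 × Fin 3, p ≠ q → ∃ r, ∀ j, A p r ≠ A q j := by decide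

lemma phi_A (p q : Fin 3 × Fin 3) : phi 4 (A q) (emon 4 (A p)) = if p = q then 1 else 0 := by
  by_cases h : p = q
  · subst h; rw [if_pos rfl, phi_emon_self _ _ (A_inj p)]
  · rw [if_neg h, phi_emon_ne _ _ _ (A_ne p q h)]

lemma indep9 : LinearIndependent ℂ (fun p : Fin 3 × Fin 3 => emon 4 (A p)) := by
  rw [Fintype.linearIndependent_iff]
  intro g hg q
  have := congrArg (phi 4 (A q)) hg
  rw [map_sum, map_zero] at this
  simp only [map_smul, phi_A, smul_eq_mul] at this
  simpa [mul_ite, Finset.sum_ite_eq] using this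

lemma X_ne : emon 5 ![0,1,3,4,5] ≠ 0 := by
  intro h
  have := phi_emon_self 5 ![0,1,3,4,5] (by decide)
  rw [h, map_zero] at this
  exact one_ne_zero this.symm

/-! ### antiderivation toolkit -/

lemma leib_s15 {d : Lam →ₗ[ℂ] Lam} (hd : IsAntiderivation d) (i : Fin 6) (b : Lam) :
    d (gG i * b) = d (gG i) * b - gG i * d b := by
  have h := hd 1 (gG i) (by rw [degComp, pow_one]; exact ⟨_, rfl⟩) b
  rw [h, pow_one, neg_smul, one_smul, sub_eq_add_neg]

lemma gg_sq (i : Fin 6) : gG i * gG i = 0 := ExteriorAlgebra.ι_sq_zero _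
lemma gg_sq' (i : Fin 6) (b : Lam) : gG i * (gG i * b) = 0 := by
  rw [← mul_assoc, gg_sq, zero_mul]
lemma gg_swap (i j : Fin 6) : gG j * gG i = -(gG i * gG j) := by
  rw [eq_neg_iff_add_eq_zero, add_comm]
  exact ExteriorAlgebra.ι_add_mul_swap (R := ℂ) (M := Fin 6 → ℂ) (Pi.single i 1) (Pi.single j 1)
lemma gg_swap' (i j : Fin 6) (b : Lam) : gG j * (gG i * b) = -(gG i * (gG j * b)) := by
  rw [← mul_assoc, gg_swap, neg_mul, mul_assoc]
lemma sw10 (b : Lam) : gG 1 * (gG 0 * b) = -(gG 0 * (gG 1 * b)) := gg_swap' 0 1 b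
lemma sw10' : gG 1 * gG 0 = -(gG 0 * gG 1) := gg_swap 0 1
lemma sw43 (b : Lam) : gG 4 * (gG 3 * b) = -(gG 3 * (gG 4 * b)) := gg_swap' 3 4 b
lemma sw43' : gG 4 * gG 3 = -(gG 3 * gG 4) := gg_swap 3 4

/-! ### identification of the monomials -/

lemma sort01 : ({0,1} : Finset (Fin 3)).sort (·≤·) = [0,1] := by
  rw [show ({0,1} : Finset (Fin 3)) = insert 0 {1} from rfl,
      Finset.sort_insert (·≤·) (by decide) (by decide), Finset.sort_singleton]
lemma sort02 : ({0,2} : Finset (Fin 3)).sort (·≤·) = [0,2] := by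
  rw [show ({0,2} : Finset (Fin 3)) = insert 0 {2} from rfl,
      Finset.sort_insert (·≤·) (by decide) (by decide), Finset.sort_singleton]
lemma sort12 : ({1,2} : Finset (Fin 3)).sort (·≤·) = [1,2] := by
  rw [show ({1,2} : Finset (Fin 3)) = insert 1 {2} from rfl,
      Finset.sort_insert (·≤·) (by decide) (by decide), Finset.sort_singleton]

def sP : Fin 3 → Finset (Fin 3) := ![{0,1},{0,2},{1,2}]
def tP : Fin 3 → Finset (Fin 3) := ![{0},{1},{2}]
def xI : Fin 3 → Fin 6 := ![0,1,2]
def yI : Fin 3 → Fin 6 := ![3,4,5]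

/-- `X = x₁x₂y₁y₂y₃` -/
def Xel : Lam := gG 0 * (gG 1 * (gG 3 * (gG 4 * gG 5)))
/-- `v = x₁x₂y₁y₂` -/
def vel : Lam := gG 0 * (gG 1 * (gG 3 * gG 4))

lemma Xel_ne : Xel ≠ 0 := by
  have h : emon 5 ![0,1,3,4,5] = Xel := by
    rw [emon_five, Xel]; norm_num [Matrix.cons_val_two, Matrix.cons_val_three, Matrix.cons_val_four, Matrix.vecHead, Matrix.vecTail]
  exact h ▸ X_ne

lemma emonA00 : emon 4 (A (0,0)) = vel := by
  rw [emon_four, vel]; norm_num [Matrix.cons_val_two, Matrix.cons_val_three, Matrix.cons_val_four, A, xpr, ypr, Matrix.vecHead, Matrix.vecTail]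

lemma vel_ne : vel ≠ 0 := emonA00 ▸ indep9.ne_zero (0,0)

lemma monom_A : ∀ i j : Fin 3, monom (sP i) (sP j) = emon 4 (A (i, j)) := by
  intro i j
  fin_cases i <;> fin_cases j <;>
    simp only [sP, A, xpr, ypr, Matrix.cons_val_zero, Matrix.cons_val_one, Matrix.head_cons,
      Fin.isValue] <;>
    rw [monom, emon_four] <;>
    simp [sort01, sort02, sort12, mul_assoc, Matrix.cons_val_zero, Matrix.cons_val_one] <;>
    norm_num [Matrix.vecHead, Matrix.vecTail]

lemma monom_t : ∀ i j : Fin 3, monom (tP i) (tP j) = gG (xI i) * gG (yI j) := by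
  intro i j
  fin_cases i <;> fin_cases j <;>
    simp only [tP, xI, yI, Matrix.cons_val_zero, Matrix.cons_val_one, Matrix.head_cons,
      Fin.isValue] <;>
    rw [monom] <;>
    simp [Finset.sort_singleton] <;>
    norm_num [Matrix.vecHead, Matrix.vecTail]

lemma card2 : ∀ s : Finset (Fin 3), s.card = 2 → ∃ i, sP i = s := by decide
lemma card1 : ∀ s : Finset (Fin 3), s.card = 1 → ∃ i, tP i = s := by decide
lemma sP_card : ∀ i, (sP i).card = 2 := by decide
lemma tP_card : ∀ i, (tP i).card = 1 := by decide

lemma big22 : bigraded 2 2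
    = Submodule.span ℂ (Set.range fun p : Fin 3 × Fin 3 => emon 4 (A p)) := by
  rw [bigraded]
  congr 1
  ext m
  constructor
  · rintro ⟨s, u, hs, hu, rfl⟩
    obtain ⟨i, rfl⟩ := card2 s (by exact_mod_cast hs)
    obtain ⟨j, rfl⟩ := card2 u (by exact_mod_cast hu)
    exact ⟨(i, j), (monom_A i j).symm⟩
  · rintro ⟨⟨i, j⟩, rfl⟩
    exact ⟨sP i, sP j, by exact_mod_cast sP_card i, by exact_mod_cast sP_card j,
      (monom_A i j).symm⟩

lemma big11 : bigraded 1 1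
    = Submodule.span ℂ (Set.range fun p : Fin 3 × Fin 3 => gG (xI p.1) * gG (yI p.2)) := by
  rw [bigraded]
  congr 1
  ext m
  constructor
  · rintro ⟨s, u, hs, hu, rfl⟩
    obtain ⟨i, rfl⟩ := card1 s (by exact_mod_cast hs)
    obtain ⟨j, rfl⟩ := card1 u (by exact_mod_cast hu)
    exact ⟨(i, j), (monom_t i j).symm⟩
  · rintro ⟨⟨i, j⟩, rfl⟩
    exact ⟨tP i, tP j, by exact_mod_cast tP_card i, by exact_mod_cast tP_card j,
      (monom_t i j).symm⟩

set_option maxHeartbeats 4000000 in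
/-- `dim H_BC^{2,2}(t) = dim ((ker ∂ ∩ ker δ_t ∩ Λ^{2,2}) / ∂(δ_t(Λ^{1,1})))`
equals `8` if `t = 0` and `7` otherwise. -/
theorem stmt15 (t11 t12 t21 t22 : ℂ) (del delta : Lam →ₗ[ℂ] Lam)
    (hdel : IsDel del) (hdelta : IsDelta t11 t12 t21 t22 delta) :
    ((t11, t12, t21, t22) = (0, 0, 0, 0) →
      quotDim (LinearMap.ker del ⊓ LinearMap.ker delta ⊓ bigraded 2 2)
        (Submodule.map del (Submodule.map delta (bigraded 1 1))) = 8) ∧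
    ((t11, t12, t21, t22) ≠ (0, 0, 0, 0) →
      quotDim (LinearMap.ker del ⊓ LinearMap.ker delta ⊓ bigraded 2 2)
        (Submodule.map del (Submodule.map delta (bigraded 1 1))) = 7) := by
  classical
  obtain ⟨hdA, hd0, hd1, hd2, hdy⟩ := hdel
  obtain ⟨hA, h0, h1, h2, h3, h4, h5⟩ := hdelta
  simp only [xg0, xg1, xg2, yg0, yg1, yg2] at hd0 hd1 hd2 h0 h1 h2 h3 h4 h5
  have hy0 := hdy 0; have hy1 := hdy 1; have hy2 := hdy 2
  simp only [yg0, yg1, yg2] at hy0 hy1 hy2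
  -- del vanishes on the (2,2) monomials
  have hdelval : ∀ p : Fin 3 × Fin 3, del (emon 4 (A p)) = 0 := by
    rintro ⟨i, j⟩
    fin_cases i <;> fin_cases j <;>
      (rw [emon_four]
       norm_num [Matrix.cons_val_two, Matrix.cons_val_three, Matrix.cons_val_four, A, xpr, ypr, Matrix.vecHead, Matrix.vecTail]
       simp only [leib_s15 hdA, hd0, hd1, hd2, hy0, hy1, hy2, zero_mul, mul_zero, sub_zero,
         zero_sub, mul_neg, neg_mul, neg_neg, mul_sub, mul_add, smul_mul_assoc,
         mul_smul_comm, mul_assoc, sub_mul, add_mul, gg_sq', gg_sq, sw10, sw10', sw43, sw43',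
         smul_zero, neg_zero, add_zero, zero_add, mul_one, smul_neg, zero_smul, sub_self])
  -- delta on the (2,2) monomials
  have hdeltaval : ∀ p : Fin 3 × Fin 3, delta (emon 4 (A p)) =
      (![![0,0,0],![0,-t12,t11],![0,-t22,t21]] p.1 p.2 : ℂ) • Xel := by
    rintro ⟨i, j⟩
    fin_cases i <;> fin_cases j <;>
      (rw [emon_four, Xel]
       norm_num [Matrix.cons_val_two, Matrix.cons_val_three, Matrix.cons_val_four, A, xpr, ypr, Matrix.vecHead, Matrix.vecTail]
       simp only [leib_s15 hA, h0, h1, h2, h3, h4, h5, zero_mul, mul_zero, sub_zero,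
         zero_sub, mul_neg, neg_mul, neg_neg, mul_sub, mul_add, smul_mul_assoc,
         mul_smul_comm, mul_assoc, sub_mul, add_mul, gg_sq', gg_sq, sw10, sw10', sw43, sw43',
         smul_zero, neg_zero, add_zero, zero_add, mul_one, smul_neg, zero_smul, sub_self]
       try module)
  -- del ∘ delta on the (1,1) monomials
  have hdd : ∀ p : Fin 3 × Fin 3, del (delta (gG (xI p.1) * gG (yI p.2))) =
      (![![0,0,0],![0,0,0],![0,0,-1]] p.1 p.2 : ℂ) • vel := by
    rintro ⟨i, j⟩
    fin_cases i <;> fin_cases j <;>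
      (rw [vel]
       norm_num [xI, yI, Matrix.vecHead, Matrix.vecTail]
       simp only [leib_s15 hA, h0, h1, h2, h3, h4, h5, leib_s15 hdA, hd0, hd1, hd2, hy0, hy1, hy2,
         map_zero, map_add, map_sub, map_neg, map_smul,
         zero_mul, mul_zero, sub_zero, zero_sub, mul_neg, neg_mul, neg_neg, mul_sub, mul_add,
         smul_mul_assoc, mul_smul_comm, mul_assoc, sub_mul, add_mul, gg_sq', gg_sq,
         sw10, sw10', sw43, sw43', smul_zero, neg_zero, add_zero, zero_add, mul_one,
         smul_neg, zero_smul, sub_self]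
       try module)
  -- setup
  haveI instB : FiniteDimensional ℂ (bigraded 2 2) := by
    rw [big22]; exact FiniteDimensional.span_of_finite ℂ (Set.finite_range _)
  have hBdel : bigraded 2 2 ≤ LinearMap.ker del := by
    rw [big22, Submodule.span_le]
    rintro m ⟨p, rfl⟩
    exact LinearMap.mem_ker.2 (hdelval p)
  set f : ↥(bigraded 2 2) →ₗ[ℂ] Lam := delta ∘ₗ (bigraded 2 2).subtype with hf
  set K : Submodule ℂ Lam := LinearMap.ker del ⊓ LinearMap.ker delta ⊓ bigraded 2 2 with hK
  set I : Submodule ℂ Lam :=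
    Submodule.map del (Submodule.map delta (bigraded 1 1)) with hI
  have hKeq : K = Submodule.map (bigraded 2 2).subtype (LinearMap.ker f) := by
    ext x
    simp only [hK, Submodule.mem_inf, LinearMap.mem_ker, Submodule.mem_map, hf,
      LinearMap.coe_comp, Function.comp_apply, Submodule.coe_subtype]
    constructor
    · rintro ⟨⟨hx1, hx2⟩, hx3⟩
      exact ⟨⟨x, hx3⟩, hx2, rfl⟩
    · rintro ⟨⟨y, hy⟩, hfy, rfl⟩
      exact ⟨⟨hBdel hy, hfy⟩, hy⟩
  have hrange : LinearMap.range f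
      = Submodule.span ℂ (Set.range fun p : Fin 3 × Fin 3 => delta (emon 4 (A p))) := by
    rw [hf, LinearMap.range_comp, Submodule.range_subtype, big22, Submodule.map_span,
      ← Set.range_comp]
    rfl
  have hfB : Module.finrank ℂ (bigraded 2 2) = 9 := by
    rw [big22, finrank_span_eq_card indep9]
    simp
  have hrn := LinearMap.finrank_range_add_finrank_ker f
  rw [hfB] at hrn
  have hKrank : Module.finrank ℂ K = Module.finrank ℂ (LinearMap.ker f) := by
    rw [hKeq]
    exact (LinearEquiv.finrank_eq
      (Submodule.equivMapOfInjective _ (Submodule.injective_subtype _) _)).symm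
  -- the ideal is the span of vel
  have hIeq : I = Submodule.span ℂ {vel} := by
    rw [hI, big11, Submodule.map_span, ← Set.range_comp, Submodule.map_span, ← Set.range_comp]
    apply le_antisymm
    · rw [Submodule.span_le]
      rintro m ⟨p, rfl⟩
      simp only [Function.comp_apply]
      rw [hdd p]
      exact Submodule.smul_mem _ _ (Submodule.mem_span_singleton_self _)
    · rw [Submodule.span_le, Set.singleton_subset_iff]
      have h22 : del (delta (gG (xI 2) * gG (yI 2))) = -vel := by
        rw [hdd (2,2)]; norm_num [Matrix.cons_val_two, Matrix.cons_val_three, Matrix.cons_val_four]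
      have : vel = -(del (delta (gG (xI 2) * gG (yI 2)))) := by rw [h22, neg_neg]
      rw [this]
      exact Submodule.neg_mem _ (Submodule.subset_span ⟨(2,2), rfl⟩)
  have hvelK : vel ∈ K := by
    have hvB : vel ∈ bigraded 2 2 := by
      rw [big22]
      exact Submodule.subset_span ⟨(0,0), emonA00⟩
    refine ⟨⟨hBdel hvB, ?_⟩, hvB⟩
    have := hdeltaval (0,0)
    rw [emonA00] at this
    simpa using this
  have hIK : I ≤ K := by
    rw [hIeq, Submodule.span_le, Set.singleton_subset_iff]
    exact hvelK
  haveI instK : FiniteDimensional ℂ K := Submodule.finiteDimensional_of_le inf_le_right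
  have hq := Submodule.finrank_quotient_add_finrank (Submodule.comap K.subtype I)
  have hN : Module.finrank ℂ (Submodule.comap K.subtype I) = 1 := by
    rw [LinearEquiv.finrank_eq (Submodule.comapSubtypeEquivOfLe hIK), hIeq]
    exact finrank_span_singleton vel_ne
  rw [hN] at hq
  constructor
  · -- t = 0
    intro ht
    rw [Prod.ext_iff, Prod.ext_iff, Prod.ext_iff] at ht
    obtain ⟨ht11, ht12, ht21, ht22⟩ : t11 = 0 ∧ t12 = 0 ∧ t21 = 0 ∧ t22 = 0 := by
      tauto
    subst ht11; subst ht12; subst ht21; subst ht22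
    have hr0 : LinearMap.range f = ⊥ := by
      rw [hrange, ← le_bot_iff, Submodule.span_le]
      rintro m ⟨⟨i, j⟩, rfl⟩
      have := hdeltaval (i, j)
      simp only [SetLike.mem_coe, Submodule.mem_bot]
      rw [this]
      fin_cases i <;> fin_cases j <;> norm_num
    rw [hr0, finrank_bot, zero_add] at hrn
    rw [quotDim]
    omega
  · -- t ≠ 0
    intro ht
    have hex : t11 ≠ 0 ∨ t12 ≠ 0 ∨ t21 ≠ 0 ∨ t22 ≠ 0 := by
      by_contra hc
      push_neg at hc
      obtain ⟨a, b, c, d⟩ := hc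
      exact ht (by rw [a, b, c, d])
    have hr1 : LinearMap.range f = Submodule.span ℂ {Xel} := by
      rw [hrange]
      apply le_antisymm
      · rw [Submodule.span_le]
        rintro m ⟨p, rfl⟩
        simp only [SetLike.mem_coe]
        rw [hdeltaval p]
        exact Submodule.smul_mem _ _ (Submodule.mem_span_singleton_self _)
      · rw [Submodule.span_le, Set.singleton_subset_iff]
        have key : ∀ (c : ℂ) (p : Fin 3 × Fin 3), c ≠ 0 → delta (emon 4 (A p)) = c • Xel →
            Xel ∈ Submodule.span ℂ
              (Set.range fun p : Fin 3 × Fin 3 => delta (emon 4 (A p))) := by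
          intro c p hc hp
          have hX : Xel = c⁻¹ • (c • Xel) := by
            rw [smul_smul, inv_mul_cancel₀ hc, one_smul]
          rw [hX, ← hp]
          exact Submodule.smul_mem _ _ (Submodule.subset_span ⟨p, rfl⟩)
        rcases hex with h | h | h | h
        · exact key t11 (1, 2) h (by rw [hdeltaval (1, 2)]; norm_num [Matrix.cons_val_two, Matrix.cons_val_three, Matrix.cons_val_four])
        · exact key (-t12) (1, 1) (neg_ne_zero.2 h) (by rw [hdeltaval (1, 1)]; norm_num)
        · exact key t21 (2, 2) h (by rw [hdeltaval (2, 2)]; norm_num [Matrix.cons_val_two, Matrix.cons_val_three, Matrix.cons_val_four])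
        · exact key (-t22) (2, 1) (neg_ne_zero.2 h) (by rw [hdeltaval (2, 1)]; norm_num [Matrix.cons_val_two, Matrix.cons_val_three, Matrix.cons_val_four])
    have : Module.finrank ℂ (LinearMap.range f) = 1 := by
      rw [hr1]
      exact finrank_span_singleton Xel_ne
    rw [this] at hrn
    have hK8 : Module.finrank ℂ K = 8 := by omega
    rw [quotDim]
    omega
end
end
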